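/- Let γ > 0, 0 < δ ≤ 1, and 0 < ρ ≤ (1+δ)γ ≤ 2γ. Let A ∈ ℝ^{m×n}, and let Δp⁺ = Δp + ρ A Δu for vectors Δp ∈ ℝ^m, Δu ∈ ℝ^n. Suppose 2⟨Δp, AΔu⟩ ≤ -2‖Δu‖²_H + ‖Δu'‖²_{H̄} + ‖Δu‖²_{H̄} where H̄ = H - γA^T A ⪰ 0 and H symmetric. Then ‖Δu‖²_{H̄} + (1/ρ)‖Δp⁺‖² ≤ ‖Δu'‖²_{H̄} + (1/ρ)‖Δp‖². -/

import Mathlib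

/-!
With `v = A Δu`, the quadratic form of `H̄ = H - γ AᵀA` is `‖Δu‖²_H - γ‖v‖²` and
`(1/ρ)‖Δp + ρv‖² = (1/ρ)‖Δp‖² + 2⟨Δp, v⟩ + ρ‖v‖²`. Bounding `2⟨Δp, v⟩` by the hypothesis, the
`H`-terms cancel against two copies of `‖Δu‖²_{H̄}` and leave the slack `(ρ - 2γ)‖v‖² ≤ 0`.
-/

open Matrix

section QuadraticForms

variable {R ι κ : Type*} [CommRing R] [Fintype ι] [Fintype κ]

theorem dotProduct_sub_smul_transpose_mul_mulVec (H : Matrix ι ι R) (A : Matrix κ ι R) (γ : R)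
    (x : ι → R) :
    x ⬝ᵥ (H - γ • (Aᵀ * A)) *ᵥ x = x ⬝ᵥ H *ᵥ x - γ * ((A *ᵥ x) ⬝ᵥ (A *ᵥ x)) := by
  rw [sub_mulVec, dotProduct_sub, smul_mulVec, dotProduct_smul, ← mulVec_mulVec,
    mulVec_transpose, dotProduct_comm x ((A *ᵥ x) ᵥ* A), ← dotProduct_mulVec, smul_eq_mul]

theorem add_smul_dotProduct_add_smul (p v : κ → R) (r : R) :
    (p + r • v) ⬝ᵥ (p + r • v) = p ⬝ᵥ p + 2 * r * (p ⬝ᵥ v) + r ^ 2 * (v ⬝ᵥ v) := by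
  simp only [dotProduct_add, add_dotProduct, dotProduct_smul, smul_dotProduct, smul_eq_mul,
    dotProduct_comm v p]
  ring

end QuadraticForms

theorem one_div_mul_add_smul_dotProduct_add_smul {K κ : Type*} [Field K] [Fintype κ] {ρ : K}
    (hρ : ρ ≠ 0) (p v : κ → K) :
    1 / ρ * ((p + ρ • v) ⬝ᵥ (p + ρ • v)) = 1 / ρ * (p ⬝ᵥ p) + 2 * (p ⬝ᵥ v) + ρ * (v ⬝ᵥ v) := by
  rw [add_smul_dotProduct_add_smul]
  field_simp

theorem stmt_18_general {m n : ℕ} (γ δ ρ : ℝ)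
    (hρ0 : 0 < ρ) (hρ1 : ρ ≤ (1 + δ) * γ) (hρ2 : (1 + δ) * γ ≤ 2 * γ)
    (A : Matrix (Fin m) (Fin n) ℝ) (H : Matrix (Fin n) (Fin n) ℝ)
    (Δp : Fin m → ℝ) (Δu Δu' : Fin n → ℝ)
    (Hbar : Matrix (Fin n) (Fin n) ℝ) (hHbar : Hbar = H - γ • (Aᵀ * A))
    (hkey : 2 * (Δp ⬝ᵥ A.mulVec Δu) ≤
      -2 * (Δu ⬝ᵥ H.mulVec Δu) + Δu' ⬝ᵥ Hbar.mulVec Δu' + Δu ⬝ᵥ Hbar.mulVec Δu) :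
    letI Δpplus : Fin m → ℝ := Δp + ρ • A.mulVec Δu
    Δu ⬝ᵥ Hbar.mulVec Δu + 1 / ρ * (Δpplus ⬝ᵥ Δpplus) ≤
      Δu' ⬝ᵥ Hbar.mulVec Δu' + 1 / ρ * (Δp ⬝ᵥ Δp) := by
  set v := A *ᵥ Δu
  have hv : 0 ≤ v ⬝ᵥ v := Finset.sum_nonneg fun i _ => mul_self_nonneg (v i)
  have hHbarΔu : Δu ⬝ᵥ Hbar *ᵥ Δu = Δu ⬝ᵥ H *ᵥ Δu - γ * (v ⬝ᵥ v) :=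
    hHbar ▸ dotProduct_sub_smul_transpose_mul_mulVec H A γ Δu
  have hslack : ρ * (v ⬝ᵥ v) ≤ 2 * γ * (v ⬝ᵥ v) :=
    mul_le_mul_of_nonneg_right (hρ1.trans hρ2) hv
  show Δu ⬝ᵥ Hbar *ᵥ Δu + 1 / ρ * ((Δp + ρ • v) ⬝ᵥ (Δp + ρ • v)) ≤ _
  rw [one_div_mul_add_smul_dotProduct_add_smul hρ0.ne']
  linarith

theorem stmt_18 {m n : ℕ} (γ δ ρ : ℝ) (hγ : 0 < γ) (hδ0 : 0 < δ) (hδ1 : δ ≤ 1)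
    (hρ0 : 0 < ρ) (hρ1 : ρ ≤ (1 + δ) * γ) (hρ2 : (1 + δ) * γ ≤ 2 * γ)
    (A : Matrix (Fin m) (Fin n) ℝ) (H : Matrix (Fin n) (Fin n) ℝ)
    (hH : H.IsHermitian)
    (Δp : Fin m → ℝ) (Δu Δu' : Fin n → ℝ)
    (Hbar : Matrix (Fin n) (Fin n) ℝ) (hHbar : Hbar = H - γ • (Aᵀ * A))
    (hpsd : Hbar.PosSemidef)
    (hkey : 2 * (Δp ⬝ᵥ A.mulVec Δu) ≤
      -2 * (Δu ⬝ᵥ H.mulVec Δu) + Δu' ⬝ᵥ Hbar.mulVec Δu' + Δu ⬝ᵥ Hbar.mulVec Δu) :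
    letI Δpplus : Fin m → ℝ := Δp + ρ • A.mulVec Δu
    Δu ⬝ᵥ Hbar.mulVec Δu + 1 / ρ * (Δpplus ⬝ᵥ Δpplus) ≤
      Δu' ⬝ᵥ Hbar.mulVec Δu' + 1 / ρ * (Δp ⬝ᵥ Δp) :=
  stmt_18_general γ δ ρ hρ0 hρ1 hρ2 A H Δp Δu Δu' Hbar hHbar hkey
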